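/- (Uniform ultimate boundedness, second part of Theorem 1.) Let z : [0,∞) → ℝ¹⁴ be differentiable and satisfy ż(t) = A z(t) + E d(t) for all t ≥ 0, where ‖d(t)‖ ≤ r̄ for all t ≥ 0. Set α = λ_min(Q), c = 2‖P·E‖, and R = (c/α) r̄. Then the trajectory is uniformly ultimately bounded with ultimate bound proportional to r̄: limsup_{t→∞} ‖z(t)‖ ≤ √(λ_max(P)/λ_min(P)) · R = √(λ_max(P)/λ_min(P)) · (c/α) · r̄. -/

import Mathlib

open Matrix Filter

noncomputable section

abbrev V14 := EuclideanSpace ℝ (Fin 14)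
abbrev V3 := EuclideanSpace ℝ (Fin 3)

/-- Lyapunov function `V(z) = zᵀ P z`. -/
def lyapV (P : Matrix (Fin 14) (Fin 14) ℝ) (z : V14) : ℝ := z ⬝ᵥ P.mulVec z

/-- Right-hand side of the perturbed linear ODE `ż = A z + E d`, as an element of
Euclidean space. -/
def odeRHS (A : Matrix (Fin 14) (Fin 14) ℝ) (E : Matrix (Fin 14) (Fin 3) ℝ)
    (zt : V14) (dt : V3) : V14 := WithLp.toLp 2 (A.mulVec zt + E.mulVec dt)

/-- Operator norm of the matrix product `P·E` viewed as a linear map `ℝ³ → ℝ¹⁴`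
between Euclidean spaces. -/
def opPE (P : Matrix (Fin 14) (Fin 14) ℝ) (E : Matrix (Fin 14) (Fin 3) ℝ) : ℝ :=
  ‖LinearMap.toContinuousLinearMap (Matrix.toEuclideanLin (P * E))‖

/-- Smallest eigenvalue of a Hermitian (real symmetric) matrix. -/
def lamMin (Q : Matrix (Fin 14) (Fin 14) ℝ) (hQ : Q.IsHermitian) : ℝ := ⨅ i, hQ.eigenvalues i

/-- Largest eigenvalue of a Hermitian (real symmetric) matrix. -/
def lamMax (P : Matrix (Fin 14) (Fin 14) ℝ) (hP : P.IsHermitian) : ℝ := ⨆ i, hP.eigenvalues i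

/-
Along a trajectory, `V(z) = zᵀPz` has derivative
`zᵀ(AᵀP + PA)z + 2 zᵀPEd ≤ -α‖z‖² + c r̄ ‖z‖ ≤ -(α / 2λ_max(P)) V + (c r̄)² / 2α`,
by the Lyapunov inequality, Young's inequality and `V ≤ λ_max(P)‖z‖²`. Grönwall's comparison
principle bounds `V(t)` by a function tending to `λ_max(P) R²`, and `λ_min(P)‖z‖² ≤ V`
turns this into the ultimate bound on `‖z‖`.
-/

open Topology
open scoped RealInnerProductSpace

namespace Matrix

variable {m n : Type*} [Fintype m] [Fintype n]

theorem dotProduct_mulVec_transpose_mul_add_mul_self {A P : Matrix n n ℝ} (hP : Pᵀ = P)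
    (x : n → ℝ) :
    x ⬝ᵥ (Aᵀ * P + P * A) *ᵥ x = 2 * (x ⬝ᵥ P *ᵥ A *ᵥ x) := by
  have : x ⬝ᵥ (Aᵀ * P) *ᵥ x = x ⬝ᵥ (P * A) *ᵥ x := by
    rw [← mulVec_mulVec, ← mulVec_mulVec, dotProduct_mulVec, vecMul_transpose, dotProduct_comm,
      dotProduct_mulVec x P, ← hP, vecMul_transpose, hP]
  rw [add_mulVec, dotProduct_add, this, ← mulVec_mulVec]
  ring

variable [DecidableEq n]

theorem dotProduct_mulVec_eq_inner (M : Matrix m n ℝ) (x : EuclideanSpace ℝ m)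
    (y : EuclideanSpace ℝ n) : x.ofLp ⬝ᵥ M *ᵥ y.ofLp = ⟪x, M.toEuclideanLin y⟫ := by
  rw [EuclideanSpace.inner_eq_star_dotProduct, star_trivial, dotProduct_comm]
  rfl

theorem dotProduct_mulVec_le_opNorm_mul (M : Matrix m n ℝ) (x : EuclideanSpace ℝ m)
    (y : EuclideanSpace ℝ n) :
    x.ofLp ⬝ᵥ M *ᵥ y.ofLp ≤ ‖LinearMap.toContinuousLinearMap M.toEuclideanLin‖ * ‖y‖ * ‖x‖ :=
  calc x.ofLp ⬝ᵥ M *ᵥ y.ofLp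
      = ⟪x, LinearMap.toContinuousLinearMap M.toEuclideanLin y⟫ := M.dotProduct_mulVec_eq_inner x y
    _ ≤ ‖x‖ * ‖LinearMap.toContinuousLinearMap M.toEuclideanLin y‖ := real_inner_le_norm _ _
    _ ≤ ‖x‖ * (‖LinearMap.toContinuousLinearMap M.toEuclideanLin‖ * ‖y‖) := by
      gcongr; exact ContinuousLinearMap.le_opNorm _ _
    _ = _ := by ring

variable {M : Matrix n n ℝ}

theorem IsHermitian.dotProduct_mulVec_self_eq_sum (hM : M.IsHermitian) (x : EuclideanSpace ℝ n) :
    x.ofLp ⬝ᵥ M *ᵥ x.ofLp = ∑ i, hM.eigenvalues i * ⟪hM.eigenvectorBasis i, x⟫ ^ 2 := by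
  have hsymm := isSymmetric_toEuclideanLin_iff.mpr hM
  rw [dotProduct_mulVec_eq_inner, ← hM.eigenvectorBasis.sum_inner_mul_inner]
  refine Finset.sum_congr rfl fun i _ => ?_
  have : M.toEuclideanLin (hM.eigenvectorBasis i) = hM.eigenvalues i • hM.eigenvectorBasis i :=
    WithLp.ofLp_injective 2 (hM.mulVec_eigenvectorBasis i)
  rw [← hsymm, this, real_inner_smul_left, real_inner_comm]
  ring

theorem IsHermitian.iInf_eigenvalues_mul_norm_sq_le (hM : M.IsHermitian)
    (x : EuclideanSpace ℝ n) :
    (⨅ i, hM.eigenvalues i) * ‖x‖ ^ 2 ≤ x.ofLp ⬝ᵥ M *ᵥ x.ofLp := by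
  rw [hM.dotProduct_mulVec_self_eq_sum, ← hM.eigenvectorBasis.sum_sq_norm_inner_right,
    Finset.mul_sum]
  simp only [Real.norm_eq_abs, sq_abs]
  gcongr with i
  exact ciInf_le (Set.finite_range _).bddBelow i

theorem IsHermitian.dotProduct_mulVec_self_le_iSup_eigenvalues_mul (hM : M.IsHermitian)
    (x : EuclideanSpace ℝ n) :
    x.ofLp ⬝ᵥ M *ᵥ x.ofLp ≤ (⨆ i, hM.eigenvalues i) * ‖x‖ ^ 2 := by
  rw [hM.dotProduct_mulVec_self_eq_sum, ← hM.eigenvectorBasis.sum_sq_norm_inner_right,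
    Finset.mul_sum]
  simp only [Real.norm_eq_abs, sq_abs]
  gcongr with i
  exact le_ciSup (Set.finite_range _).bddAbove i

theorem PosDef.iInf_eigenvalues_pos [Nonempty n] (hM : M.PosDef) :
    0 < ⨅ i, hM.isHermitian.eigenvalues i := by
  obtain ⟨i, hi⟩ := exists_eq_ciInf_of_finite (f := hM.isHermitian.eigenvalues)
  exact hi ▸ hM.eigenvalues_pos i

theorem PosDef.iSup_eigenvalues_pos [Nonempty n] (hM : M.PosDef) :
    0 < ⨆ i, hM.isHermitian.eigenvalues i :=
  (hM.eigenvalues_pos (Classical.arbitrary n)).trans_le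
    (le_ciSup (Set.finite_range _).bddAbove _)

variable [DecidableEq m] {A P Q : Matrix n n ℝ} {E : Matrix n m ℝ}

theorem two_mul_dotProduct_mulVec_add_le_of_lyapunov
    (hP : P.IsHermitian) (hQ : Q.IsHermitian) (hLyap : (-Q - (Aᵀ * P + P * A)).PosSemidef)
    (x : EuclideanSpace ℝ n) (w : EuclideanSpace ℝ m) :
    2 * (x.ofLp ⬝ᵥ P *ᵥ (A *ᵥ x.ofLp + E *ᵥ w.ofLp)) ≤
      -(⨅ i, hQ.eigenvalues i) * ‖x‖ ^ 2 +
        2 * ‖LinearMap.toContinuousLinearMap (P * E).toEuclideanLin‖ * ‖w‖ * ‖x‖ := by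
  have hPt : Pᵀ = P := by rw [← conjTranspose_eq_transpose_of_trivial, hP.eq]
  have hdrift : x.ofLp ⬝ᵥ (Aᵀ * P + P * A) *ᵥ x.ofLp ≤ -(x.ofLp ⬝ᵥ Q *ᵥ x.ofLp) := by
    have := hLyap.dotProduct_mulVec_nonneg x.ofLp
    simp only [star_trivial, sub_mulVec, neg_mulVec, dotProduct_sub, dotProduct_neg] at this
    linarith
  have hQx := hQ.iInf_eigenvalues_mul_norm_sq_le x
  have hcross := (P * E).dotProduct_mulVec_le_opNorm_mul x w
  rw [dotProduct_mulVec_transpose_mul_add_mul_self hPt] at hdrift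
  rw [← mulVec_mulVec] at hcross
  rw [mulVec_add, dotProduct_add]
  linarith

theorem two_mul_dotProduct_mulVec_add_le_neg_mul_add_of_lyapunov [Nonempty n] (hP : P.PosDef)
    (hQ : Q.PosDef) (hLyap : (-Q - (Aᵀ * P + P * A)).PosSemidef) (x : EuclideanSpace ℝ n)
    {w : EuclideanSpace ℝ m} {r : ℝ} (hw : ‖w‖ ≤ r) :
    2 * (x.ofLp ⬝ᵥ P *ᵥ (A *ᵥ x.ofLp + E *ᵥ w.ofLp)) ≤
      -((⨅ i, hQ.isHermitian.eigenvalues i) / (2 * ⨆ i, hP.isHermitian.eigenvalues i)) *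
          (x.ofLp ⬝ᵥ P *ᵥ x.ofLp) +
        (2 * ‖LinearMap.toContinuousLinearMap (P * E).toEuclideanLin‖ * r) ^ 2 /
          (2 * ⨅ i, hQ.isHermitian.eigenvalues i) := by
  have hderiv := two_mul_dotProduct_mulVec_add_le_of_lyapunov (E := E) hP.isHermitian
    hQ.isHermitian hLyap x w
  have hupper := hP.isHermitian.dotProduct_mulVec_self_le_iSup_eigenvalues_mul x
  set α := ⨅ i, hQ.isHermitian.eigenvalues i
  set lmax := ⨆ i, hP.isHermitian.eigenvalues i
  set c := 2 * ‖LinearMap.toContinuousLinearMap (P * E).toEuclideanLin‖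
  have hα : 0 < α := hQ.iInf_eigenvalues_pos
  have hlmax : 0 < lmax := hP.iSup_eigenvalues_pos
  have hc : 0 ≤ c := by positivity
  have hquad : α / (2 * lmax) * (x.ofLp ⬝ᵥ P *ᵥ x.ofLp) ≤ α / 2 * ‖x‖ ^ 2 :=
    calc α / (2 * lmax) * (x.ofLp ⬝ᵥ P *ᵥ x.ofLp) ≤ α / (2 * lmax) * (lmax * ‖x‖ ^ 2) := by
          gcongr
      _ = α / 2 * ‖x‖ ^ 2 := by field_simp
  have hyoung : c * ‖w‖ * ‖x‖ ≤ α / 2 * ‖x‖ ^ 2 + (c * r) ^ 2 / (2 * α) :=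
    calc c * ‖w‖ * ‖x‖ ≤ c * r * ‖x‖ := by gcongr
      _ = α / 2 * ‖x‖ ^ 2 + (c * r) ^ 2 / (2 * α) - (α * ‖x‖ - c * r) ^ 2 / (2 * α) := by
          field_simp; ring
      _ ≤ α / 2 * ‖x‖ ^ 2 + (c * r) ^ 2 / (2 * α) := sub_le_self _ (by positivity)
  linarith

end Matrix

theorem HasDerivAt.dotProduct_mulVec_self {n : Type*} [Fintype n] [DecidableEq n]
    {M : Matrix n n ℝ} (hM : M.IsHermitian) {z : ℝ → EuclideanSpace ℝ n}
    {v : EuclideanSpace ℝ n} {t : ℝ} (hz : HasDerivAt z v t) :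
    HasDerivAt (fun s => (z s).ofLp ⬝ᵥ M *ᵥ (z s).ofLp) (2 * ((z t).ofLp ⬝ᵥ M *ᵥ v.ofLp)) t := by
  set T := LinearMap.toContinuousLinearMap M.toEuclideanLin
  have hsymm : M.toEuclideanLin.IsSymmetric := isSymmetric_toEuclideanLin_iff.mpr hM
  simp only [dotProduct_mulVec_eq_inner]
  refine (hz.inner ℝ (T.hasFDerivAt.comp_hasDerivAt t hz)).congr_deriv ?_
  change ⟪z t, M.toEuclideanLin v⟫ + ⟪v, M.toEuclideanLin (z t)⟫ = _
  rw [← hsymm, real_inner_comm]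
  ring

theorem le_gronwallBound_of_hasDerivAt {f f' : ℝ → ℝ} {K ε a t : ℝ}
    (hf : ∀ s ≥ a, HasDerivAt f (f' s) s) (bound : ∀ s ≥ a, f' s ≤ K * f s + ε) (ht : a ≤ t) :
    f t ≤ gronwallBound (f a) K ε (t - a) :=
  le_gronwallBound_of_liminf_deriv_right_le (b := t)
    (fun s hs => (hf s hs.1).continuousAt.continuousWithinAt)
    (fun s hs _ hr => (hf s hs.1).hasDerivWithinAt.liminf_right_slope_le hr) le_rfl
    (fun s hs => bound s hs.1) t ⟨ht, le_rfl⟩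

theorem tendsto_gronwallBound_atTop {δ K ε : ℝ} (hK : K < 0) :
    Tendsto (gronwallBound δ K ε) atTop (𝓝 (-(ε / K))) := by
  rw [gronwallBound_of_K_ne_0 hK.ne]
  have hexp : Tendsto (fun x => Real.exp (K * x)) atTop (𝓝 0) :=
    Real.tendsto_exp_atBot.comp (tendsto_id.const_mul_atTop_of_neg hK)
  convert (hexp.const_mul δ).add ((hexp.sub_const 1).const_mul (ε / K)) using 2
  ring

theorem limsup_norm_le_of_hasDerivAt_le_neg_mul_add {F : Type*} [NormedAddCommGroup F]
    {z : ℝ → F} {W W' : ℝ → ℝ} {a β K : ℝ} (ha : 0 < a) (hβ : 0 < β)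
    (hW : ∀ t ≥ 0, HasDerivAt W (W' t) t) (hdecay : ∀ t ≥ 0, W' t ≤ -β * W t + K)
    (hlow : ∀ t, a * ‖z t‖ ^ 2 ≤ W t) :
    limsup (fun t => ‖z t‖) atTop ≤ Real.sqrt (K / (β * a)) := by
  set B := fun t => Real.sqrt (gronwallBound (W 0) (-β) K t / a)
  have hB : Tendsto B atTop (𝓝 (Real.sqrt (K / (β * a)))) := by
    have := ((tendsto_gronwallBound_atTop (δ := W 0) (ε := K) (neg_lt_zero.mpr hβ)).div_const
      a).sqrt
    convert this using 2
    field_simp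
  have hzB : ∀ t ≥ 0, ‖z t‖ ≤ B t := by
    intro t ht
    have := le_gronwallBound_of_hasDerivAt (K := -β) (ε := K) hW
      (fun s hs => by linarith [hdecay s hs]) ht
    rw [sub_zero] at this
    exact Real.le_sqrt_of_sq_le ((le_div_iff₀' ha).mpr ((hlow t).trans this))
  exact (limsup_le_limsup (eventually_ge_atTop 0 |>.mono hzB)
    (isCoboundedUnder_le_of_le atTop fun t => norm_nonneg _) hB.isBoundedUnder_le).trans_eq
    hB.limsup_eq

theorem stmt8_general
    (A : Matrix (Fin 14) (Fin 14) ℝ) (E : Matrix (Fin 14) (Fin 3) ℝ)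
    (P Q : Matrix (Fin 14) (Fin 14) ℝ) (hP : P.PosDef) (hQ : Q.PosDef)
    (hLyap : (-Q - (Aᵀ * P + P * A)).PosSemidef)
    (rbar : ℝ)
    (d : ℝ → V3) (hdbound : ∀ t, 0 ≤ t → ‖d t‖ ≤ rbar)
    (z : ℝ → V14)
    (hode : ∀ t, 0 ≤ t → HasDerivAt z (odeRHS A E (z t) (d t)) t)
    (α c R : ℝ)
    (hα : α = lamMin Q hQ.isHermitian) (hc : c = 2 * opPE P E)
    (hR : R = (c / α) * rbar) :
    Filter.limsup (fun t => ‖z t‖) Filter.atTop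
      ≤ Real.sqrt (lamMax P hP.isHermitian / lamMin P hP.isHermitian) * R := by
  subst hα hc hR
  have hlmin : 0 < lamMin P hP.isHermitian := hP.iInf_eigenvalues_pos
  have hrbar : 0 ≤ rbar := (norm_nonneg _).trans (hdbound 0 le_rfl)
  have hlmax : 0 < lamMax P hP.isHermitian := hP.iSup_eigenvalues_pos
  have hα : 0 < lamMin Q hQ.isHermitian := hQ.iInf_eigenvalues_pos
  have hPE : 0 ≤ opPE P E := norm_nonneg _
  calc limsup (fun t => ‖z t‖) atTop
      ≤ Real.sqrt ((2 * opPE P E * rbar) ^ 2 / (2 * lamMin Q hQ.isHermitian) /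
          (lamMin Q hQ.isHermitian / (2 * lamMax P hP.isHermitian) * lamMin P hP.isHermitian)) :=
        limsup_norm_le_of_hasDerivAt_le_neg_mul_add hlmin (by positivity)
          (fun t ht => (hode t ht).dotProduct_mulVec_self hP.isHermitian)
          (fun t ht => two_mul_dotProduct_mulVec_add_le_neg_mul_add_of_lyapunov hP hQ hLyap
            (z t) (hdbound t ht))
          (fun t => hP.isHermitian.iInf_eigenvalues_mul_norm_sq_le (z t))
    _ = _ := by
      rw [← Real.sqrt_sq (by positivity : 0 ≤ 2 * opPE P E / lamMin Q hQ.isHermitian * rbar),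
        ← Real.sqrt_mul (by positivity)]
      congr 1
      field_simp

/-- **Uniform ultimate boundedness, second part of Theorem 1.**
With `α = λ_min(Q)`, `c = 2‖P·E‖`, `R = (c/α) r̄`: the trajectory is uniformly
ultimately bounded with ultimate bound proportional to `r̄`:
`limsup_{t→∞} ‖z(t)‖ ≤ √(λ_max(P)/λ_min(P)) · R = √(λ_max(P)/λ_min(P)) · (c/α) · r̄`. -/
theorem stmt8
    (A : Matrix (Fin 14) (Fin 14) ℝ) (E : Matrix (Fin 14) (Fin 3) ℝ)
    (P Q : Matrix (Fin 14) (Fin 14) ℝ) (hP : P.PosDef) (hQ : Q.PosDef)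
    (hLyap : (-Q - (Aᵀ * P + P * A)).PosSemidef)
    (rbar : ℝ) (hrbar : 0 ≤ rbar)
    (d : ℝ → V3) (hd : Continuous d) (hdbound : ∀ t, 0 ≤ t → ‖d t‖ ≤ rbar)
    (z : ℝ → V14)
    (hode : ∀ t, 0 ≤ t → HasDerivAt z (odeRHS A E (z t) (d t)) t)
    (α c R : ℝ)
    (hα : α = lamMin Q hQ.isHermitian) (hc : c = 2 * opPE P E)
    (hR : R = (c / α) * rbar) :
    Filter.limsup (fun t => ‖z t‖) Filter.atTop
      ≤ Real.sqrt (lamMax P hP.isHermitian / lamMin P hP.isHermitian) * R :=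
  stmt8_general A E P Q hP hQ hLyap rbar d hdbound z hode α c R hα hc hR
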